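/- Let Ψ = {ψ_i}_{i=1}^M be a Parseval frame for F^N with ψ_M = 0 and ψ_{M−1} ≠ 0. Define Γ = {γ_i} by γ_i = ψ_i for i ≤ M−2 and γ_{M−1} = γ_M = ψ_{M−1}/√2. Then Γ is a Parseval frame and TC(Γ) > TC(Ψ). In particular, no Parseval frame containing a zero vector maximizes total coherence. -/

import Mathlib

/-! Splitting the frame vector `ψ_p` into two copies `ψ_p / √2` in the slots `p` and `q` (where
`ψ_q = 0`) leaves `∑ ψ_i ψ_i*` unchanged because `2 · (1/√2)² = 1`. On the Gram matrix `G` it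
spreads row and column `p` over `p, q` with weight `1/√2`: the diagonal keeps its sum, while the
full sum of `|G_ij|` grows by `(√2 - 1)(∑_k |G_kp| + ∑_j |G_pj| + (√2 - 1)|G_pp|) ≥ |G_pp|`,
which is positive since `ψ_p ≠ 0`. -/

open Matrix Finset

noncomputable def totalCoherence {N M : ℕ} (Φ : Matrix (Fin N) (Fin M) ℂ) : ℝ :=
  ∑ i, ∑ j ∈ Finset.univ.erase i, ‖(Φᴴ * Φ) i j‖

theorem conjTranspose_mul_self_apply_self_ne_zero {ι m R : Type*} [Fintype m] [PartialOrder R]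
    [CommRing R] [StarRing R] [StarOrderedRing R] [NoZeroDivisors R] {Ψ : Matrix m ι R} {p : ι}
    (hp : ∃ n, Ψ n p ≠ 0) : (Ψᴴ * Ψ) p p ≠ 0 := by
  obtain ⟨n, hn⟩ := hp
  have hcol : (fun n => Ψ n p) ≠ 0 := fun h => hn (congrFun h n)
  rw [mul_apply']
  exact mt dotProduct_star_self_eq_zero.mp hcol

section spreadPair

variable {ι R : Type*} [DecidableEq ι] (p q : ι)

def spreadPair [Mul R] (a : R) (g : ι → R) : ι → R :=
  fun j => if j = p ∨ j = q then g p * a else g j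

variable {p q}

theorem spreadPair_eq_add_single [Ring R] (hpq : p ≠ q) (a : R) (g : ι → R) :
    spreadPair p q a g = g + Pi.single p (g p * (a - 1)) + Pi.single q (g p * a - g q) := by
  ext j
  by_cases hjp : j = p
  · subst hjp; simp [spreadPair, hpq, mul_sub]
  by_cases hjq : j = q
  · subst hjq; simp [spreadPair, Ne.symm hpq]
  simp [spreadPair, hjp, hjq]

theorem sum_spreadPair [Fintype ι] [Ring R] (hpq : p ≠ q) (a : R) (g : ι → R) :
    ∑ j, spreadPair p q a g j = ∑ j, g j + g p * (2 * a - 1) - g q := by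
  simp only [spreadPair_eq_add_single hpq, Pi.add_apply, sum_add_distrib, Finset.sum_pi_single',
    mem_univ, if_true]
  noncomm_ring

theorem norm_spreadPair [NormedDivisionRing R] (a : R) (g : ι → R) (j : ι) :
    ‖spreadPair p q a g j‖ = spreadPair p q ‖a‖ (fun k => ‖g k‖) j := by
  unfold spreadPair; split_ifs <;> simp

theorem spreadPair_mul_star_spreadPair [CommRing R] [StarRing R] (a : R) (g h : ι → R) (j : ι) :
    spreadPair p q a g j * star (spreadPair p q a h j) =
      spreadPair p q (a * star a) (fun k => g k * star (h k)) j := by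
  unfold spreadPair; split_ifs
  · simp only [star_mul']; ring
  · rfl

theorem spreadPair_spreadPair_diag [CommSemigroup R] (a : R) (F : ι → ι → R) (i : ι) :
    spreadPair p q a (fun k => spreadPair p q a (F k) i) i =
      spreadPair p q (a * a) (fun k => F k k) i := by
  unfold spreadPair; split_ifs <;> simp [mul_assoc]

variable {m : Type*}

theorem conjTranspose_mul_self_of_spreadPair [Fintype m] [CommRing R] [StarRing R] {a : R}
    {Ψ Γ : Matrix m ι R} (hΓ : ∀ n, Γ n = spreadPair p q a (Ψ n)) (i j : ι) :
    (Γᴴ * Γ) i j = spreadPair p q (star a) (fun k => spreadPair p q a ((Ψᴴ * Ψ) k) j) i := by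
  simp only [mul_apply, conjTranspose_apply, hΓ, spreadPair]
  split_ifs <;> simp only [star_mul', sum_mul] <;> exact sum_congr rfl fun _ _ => by ring

theorem mul_conjTranspose_self_of_spreadPair [Fintype ι] [CommRing R] [StarRing R] (hpq : p ≠ q)
    {a : R} (ha : 2 * (a * star a) = 1) {Ψ Γ : Matrix m ι R}
    (hΓ : ∀ n, Γ n = spreadPair p q a (Ψ n)) (hq : ∀ n, Ψ n q = 0) :
    Γ * Γᴴ = Ψ * Ψᴴ := by
  ext n n'
  simp only [mul_apply, conjTranspose_apply, hΓ, spreadPair_mul_star_spreadPair,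
    sum_spreadPair hpq, ha, hq, sub_self, mul_zero, zero_mul, add_zero, sub_zero]

theorem sum_sum_spreadPair_spreadPair [Fintype ι] [CommRing R] (hpq : p ≠ q) (a : R)
    (F : ι → ι → R) (hFq : ∀ k, F k q = 0) (hqF : ∀ k, F q k = 0) :
    ∑ i, ∑ j, spreadPair p q a (fun k => spreadPair p q a (F k) j) i =
      ∑ i, ∑ j, F i j + (∑ k, F k p + ∑ j, F p j + F p p * (2 * a - 1)) * (2 * a - 1) := by
  rw [sum_comm]
  simp only [sum_spreadPair hpq, sum_add_distrib, sum_sub_distrib, ← sum_mul]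
  rw [sum_comm]
  simp only [sum_spreadPair hpq, sum_add_distrib, sum_sub_distrib, ← sum_mul, hFq, hqF,
    sum_const_zero]
  ring

end spreadPair

theorem totalCoherence_eq_sub {N M : ℕ} (Φ : Matrix (Fin N) (Fin M) ℂ) :
    totalCoherence Φ = ∑ i, ∑ j, ‖(Φᴴ * Φ) i j‖ - ∑ i, ‖(Φᴴ * Φ) i i‖ := by
  simp only [totalCoherence, sum_erase_eq_sub (mem_univ _), sum_sub_distrib]

theorem totalCoherence_of_spreadPair {N M : ℕ} {p q : Fin M} (hpq : p ≠ q) {a : ℂ}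
    (ha : 2 * ‖a‖ ^ 2 = 1) {Ψ Γ : Matrix (Fin N) (Fin M) ℂ}
    (hΓ : ∀ n, Γ n = spreadPair p q a (Ψ n)) (hq : ∀ n, Ψ n q = 0) :
    totalCoherence Γ = totalCoherence Ψ + (∑ k, ‖(Ψᴴ * Ψ) k p‖ + ∑ j, ‖(Ψᴴ * Ψ) p j‖ +
      ‖(Ψᴴ * Ψ) p p‖ * (2 * ‖a‖ - 1)) * (2 * ‖a‖ - 1) := by
  have hGq : ∀ k, ‖(Ψᴴ * Ψ) k q‖ = 0 := by simp [mul_apply, hq]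
  have hqG : ∀ k, ‖(Ψᴴ * Ψ) q k‖ = 0 := by simp [mul_apply, hq]
  simp only [totalCoherence_eq_sub, conjTranspose_mul_self_of_spreadPair hΓ, norm_spreadPair,
    norm_star, spreadPair_spreadPair_diag, sum_spreadPair hpq, ← sq, ha,
    sum_sum_spreadPair_spreadPair hpq ‖a‖ (fun k l => ‖(Ψᴴ * Ψ) k l‖) hGq hqG, hGq]
  ring

open scoped ComplexOrder in
theorem totalCoherence_lt_of_spreadPair {N M : ℕ} {p q : Fin M} (hpq : p ≠ q) {a : ℂ}
    (ha : 2 * ‖a‖ ^ 2 = 1) {Ψ Γ : Matrix (Fin N) (Fin M) ℂ}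
    (hΓ : ∀ n, Γ n = spreadPair p q a (Ψ n)) (hq : ∀ n, Ψ n q = 0) (hp : ∃ n, Ψ n p ≠ 0) :
    totalCoherence Ψ < totalCoherence Γ := by
  rw [totalCoherence_of_spreadPair hpq ha hΓ hq]
  have hpp : 0 < ‖(Ψᴴ * Ψ) p p‖ :=
    norm_pos_iff.mpr (conjTranspose_mul_self_apply_self_ne_zero hp)
  have hgain : 0 < 2 * ‖a‖ - 1 := by nlinarith [norm_nonneg a]
  have hsums : 0 ≤ ∑ k, ‖(Ψᴴ * Ψ) k p‖ + ∑ j, ‖(Ψᴴ * Ψ) p j‖ :=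
    add_nonneg (sum_nonneg fun _ _ => norm_nonneg _) (sum_nonneg fun _ _ => norm_nonneg _)
  exact lt_add_of_pos_right _
    (mul_pos (add_pos_of_nonneg_of_pos hsums (mul_pos hpp hgain)) hgain)

theorem zero_vector_not_optimal {N M : ℕ}
    (Ψ Γ : Matrix (Fin N) (Fin M) ℂ) (p q : Fin M) (hpq : p ≠ q)
    (hΨ : Ψ * Ψᴴ = 1)
    (hq : ∀ n, Ψ n q = 0) (hp : ∃ n, Ψ n p ≠ 0)
    (hΓ : ∀ n j, Γ n j = if j = p ∨ j = q then Ψ n p / (Real.sqrt 2 : ℂ) else Ψ n j) :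
    Γ * Γᴴ = 1 ∧ totalCoherence Ψ < totalCoherence Γ ∧
      ¬ (∀ Θ : Matrix (Fin N) (Fin M) ℂ, Θ * Θᴴ = 1 →
          totalCoherence Θ ≤ totalCoherence Ψ) := by
  set a : ℂ := (Real.sqrt 2 : ℂ)⁻¹
  have hΓa : ∀ n, Γ n = spreadPair p q a (Ψ n) := fun n => funext fun j => by
    rw [hΓ, spreadPair, div_eq_mul_inv]
  have ha : 2 * ‖a‖ ^ 2 = 1 := by
    rw [norm_inv, Complex.norm_real, Real.norm_of_nonneg (Real.sqrt_nonneg 2), inv_pow,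
      Real.sq_sqrt zero_le_two, mul_inv_cancel₀ two_ne_zero]
  have ha' : 2 * (a * star a) = 1 := by
    rw [Complex.star_def, Complex.mul_conj, Complex.normSq_eq_norm_sq]
    exact_mod_cast ha
  have hparseval : Γ * Γᴴ = 1 := (mul_conjTranspose_self_of_spreadPair hpq ha' hΓa hq).trans hΨ
  have hlt := totalCoherence_lt_of_spreadPair hpq ha hΓa hq hp
  exact ⟨hparseval, hlt, fun hmax => (hmax Γ hparseval).not_gt hlt⟩
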